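/- In the unrolled graph ICM(G) of a DAG G, a node X_{i;n} has no outgoing directed edges (is a first-order sink) if and only if for every m ≠ n and every j ≠ i, X_{i;n} is m-separated from X_{j;m} given the conditioning set {X_{k;n} : k ≠ i}. -/

import Mathlib

/-- A mixed graph with directed and bidirected edges. -/
structure MixedGraph (V : Type*) where
  dir : V → V → Prop
  bi : V → V → Prop

namespace MixedGraph

variable {V : Type*} (G : MixedGraph V)

/-- Two vertices are adjacent if they are joined by a directed or bidirected edge. -/
def Adj (p q : V) : Prop := G.dir p q ∨ G.dir q p ∨ G.bi p q ∨ G.bi q p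

/-- There is an edge between `p` and `q` with an arrowhead at `q`. -/
def ArrowInto (p q : V) : Prop := G.dir p q ∨ G.bi p q ∨ G.bi q p

/-- `v` is a collider between `u` and `w`: both edges have arrowheads into `v`. -/
def IsCollider (u v w : V) : Prop := G.ArrowInto u v ∧ G.ArrowInto w v

/-- `z` is a descendant of `v` (along directed edges, reflexively). -/
def Descendant (v z : V) : Prop := Relation.ReflTransGen G.dir v z

/-- `p 0, p 1, …, p k` is a path from `x` to `y`: consecutive vertices adjacent,
no repeated vertices. -/
def IsPath (k : ℕ) (p : ℕ → V) (x y : V) : Prop :=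
  p 0 = x ∧ p k = y ∧ (∀ i < k, G.Adj (p i) (p (i + 1))) ∧
    ∀ i j, i ≤ k → j ≤ k → p i = p j → i = j

/-- The path `p 0, …, p k` is blocked by the conditioning set `Z`: some interior
vertex is a collider with no descendant in `Z`, or a non-collider in `Z`. -/
def Blocked (Z : Set V) (k : ℕ) (p : ℕ → V) : Prop :=
  ∃ i, 0 < i ∧ i < k ∧
    ((G.IsCollider (p (i - 1)) (p i) (p (i + 1)) ∧ ∀ z ∈ Z, ¬ G.Descendant (p i) z) ∨
      (¬ G.IsCollider (p (i - 1)) (p i) (p (i + 1)) ∧ p i ∈ Z))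

/-- m-separation: every path from `x` to `y` is blocked by `Z`. -/
def MSep (x y : V) (Z : Set V) : Prop :=
  ∀ (k : ℕ) (p : ℕ → V), G.IsPath k p x y → G.Blocked Z k p

/-- A v-structure `a → b ← c` (arrowheads into `b`, endpoints nonadjacent). -/
def VStruct (a b c : V) : Prop :=
  a ≠ c ∧ ¬ G.Adj a c ∧ G.ArrowInto a b ∧ G.ArrowInto c b

end MixedGraph

/-- A relation is acyclic if it has no directed cycles. -/
def IsAcyclicRel {α : Type*} (E : α → α → Prop) : Prop :=
  ∀ a, ¬ Relation.TransGen E a a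

/-- The unrolled mixed graph `ICM(G)` of a DAG with edge relation `E` on `Fin d`:
a copy of the DAG at each sample index `n`, and bidirected edges between the
copies `X_{i;n} ↔ X_{i;m}` of each variable. -/
def icm {d : ℕ} (E : Fin d → Fin d → Prop) : MixedGraph (Fin d × ℕ) where
  dir p q := p.2 = q.2 ∧ E p.1 q.1
  bi p q := p.1 = q.1 ∧ p.2 ≠ q.2

/-!
If `X_i` has no children, every path out of `X_{i;n}` towards another variable in another copy
is blocked at its second vertex. That vertex is either a copy `X_{i;n'}`, which has no children
and so is a collider whose only descendant is itself, outside the conditioning set; or a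
parent `X_{k;n}`, which is a non-collider inside the conditioning set. Conversely, a child
`X_{j;n}` of `X_{i;n}` is a collider in the conditioning set on `X_{i;n} → X_{j;n} ↔ X_{j;n+1}`.
-/

namespace MixedGraph

variable {V : Type*} {G : MixedGraph V}

theorem Adj.symm {u v : V} (h : G.Adj u v) : G.Adj v u := by
  unfold Adj at *
  tauto

theorem ArrowInto.adj {u v : V} (h : G.ArrowInto u v) : G.Adj u v := by
  unfold ArrowInto Adj at *
  tauto

theorem arrowInto_of_adj_of_forall_not_dir {u v : V} (hv : ∀ w, ¬ G.dir v w)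
    (h : G.Adj u v) : G.ArrowInto u v := by
  rcases h with h | h | h | h
  · exact Or.inl h
  · exact absurd h (hv u)
  · exact Or.inr (Or.inl h)
  · exact Or.inr (Or.inr h)

theorem Descendant.eq_of_forall_not_dir {v z : V} (hv : ∀ w, ¬ G.dir v w)
    (h : G.Descendant v z) : z = v := by
  rcases Relation.ReflTransGen.cases_head h with h | ⟨w, hvw, -⟩
  · exact h.symm
  · exact absurd hvw (hv w)

theorem IsPath.two_le {k : ℕ} {p : ℕ → V} {x y : V} (hp : G.IsPath k p x y) (hxy : x ≠ y)
    (hadj : ¬ G.Adj x y) : 2 ≤ k := by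
  obtain ⟨h0, hk, hstep, -⟩ := hp
  match k, hk, hstep with
  | 0, hk, _ => exact absurd (h0.symm.trans hk) hxy
  | 1, hk, hstep => exact absurd (h0 ▸ hk ▸ hstep 0 one_pos) hadj
  | _ + 2, _, _ => omega

/-- A childless vertex is a collider on every path through it, and it is its own only
descendant. -/
theorem blocked_of_forall_not_dir {Z : Set V} {k r : ℕ} {p : ℕ → V} {x y : V}
    (hp : G.IsPath k p x y) (hr : 0 < r) (hrk : r < k) (hchild : ∀ w, ¬ G.dir (p r) w)
    (hZ : p r ∉ Z) : G.Blocked Z k p := by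
  have hprev : G.Adj (p (r - 1)) (p r) := by
    simpa [Nat.sub_add_cancel hr] using hp.2.2.1 (r - 1) (by omega)
  have hnext : G.Adj (p (r + 1)) (p r) := (hp.2.2.1 r hrk).symm
  refine ⟨r, hr, hrk, Or.inl ⟨⟨?_, ?_⟩, ?_⟩⟩
  · exact arrowInto_of_adj_of_forall_not_dir hchild hprev
  · exact arrowInto_of_adj_of_forall_not_dir hchild hnext
  · intro z hz hdesc
    exact hZ (Descendant.eq_of_forall_not_dir hchild hdesc ▸ hz)

theorem blocked_of_not_arrowInto {Z : Set V} {k r : ℕ} {p : ℕ → V} (hr : 0 < r) (hrk : r < k)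
    (hnot : ¬ G.ArrowInto (p (r - 1)) (p r)) (hZ : p r ∈ Z) : G.Blocked Z k p :=
  ⟨r, hr, hrk, Or.inr ⟨fun h => hnot h.1, hZ⟩⟩

def path3 (a b c : V) : ℕ → V
  | 0 => a
  | 1 => b
  | _ => c

theorem isPath_path3 {a b c : V} (hab : a ≠ b) (hbc : b ≠ c) (hac : a ≠ c) (hadj₁ : G.Adj a b)
    (hadj₂ : G.Adj b c) : G.IsPath 2 (path3 a b c) a c := by
  refine ⟨rfl, rfl, fun s hs => ?_, fun s t hs ht hst => ?_⟩
  · interval_cases s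
    exacts [hadj₁, hadj₂]
  · interval_cases s <;> interval_cases t <;> simp_all [path3, eq_comm]

theorem not_mSep_of_isCollider_mem {Z : Set V} {a b c : V} (hab : a ≠ b) (hbc : b ≠ c)
    (hac : a ≠ c) (hcol : G.IsCollider a b c) (hb : b ∈ Z) : ¬ G.MSep a c Z := by
  intro hsep
  have hpath := isPath_path3 hab hbc hac hcol.1.adj hcol.2.adj.symm
  obtain ⟨r, hr, hr2, hblock⟩ := hsep 2 _ hpath
  obtain rfl : r = 1 := by omega
  rcases hblock with ⟨-, hdesc⟩ | ⟨hnot, -⟩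
  · exact hdesc b hb .refl
  · exact hnot hcol

end MixedGraph

section ICM

variable {d : ℕ} {E : Fin d → Fin d → Prop}

theorem icm_adj_fst_eq_or_snd_eq {u v : Fin d × ℕ} (h : (icm E).Adj u v) :
    u.1 = v.1 ∨ u.2 = v.2 := by
  rcases h with h | h | h | h
  exacts [Or.inr h.1, Or.inr h.1.symm, Or.inl h.1, Or.inl h.1.symm]

variable {i : Fin d} (hsink : ∀ j, ¬ E i j)
include hsink

theorem icm_not_dir_of_sink {u : Fin d × ℕ} (hu : u.1 = i) (w : Fin d × ℕ) :
    ¬ (icm E).dir u w :=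
  fun h => hsink w.1 (hu ▸ h.2)

theorem icm_not_arrowInto_of_sink {u v : Fin d × ℕ} (hu : u.1 = i) (hv : v.1 ≠ i) :
    ¬ (icm E).ArrowInto u v := by
  rintro (h | h | h)
  · exact icm_not_dir_of_sink hsink hu v h
  · exact hv (h.1 ▸ hu)
  · exact hv (h.1.symm ▸ hu)

theorem icm_mSep_of_sink {n m : ℕ} {j : Fin d} (hm : m ≠ n) (hj : j ≠ i) :
    (icm E).MSep (i, n) (j, m) {p | p.2 = n ∧ p.1 ≠ i} := by
  intro k p hp
  have hk : 2 ≤ k := hp.two_le (fun h => hj (congrArg Prod.fst h).symm) fun h => by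
    rcases icm_adj_fst_eq_or_snd_eq h with h | h
    exacts [hj h.symm, hm h.symm]
  have hadj : (icm E).Adj (i, n) (p 1) := hp.1 ▸ hp.2.2.1 0 (by omega)
  by_cases hp1 : (p 1).1 = i
  · exact MixedGraph.blocked_of_forall_not_dir hp one_pos hk (icm_not_dir_of_sink hsink hp1)
      fun h => h.2 hp1
  · have hcopy : (p 1).2 = n := by
      rcases icm_adj_fst_eq_or_snd_eq hadj with h | h
      exacts [absurd h.symm hp1, h.symm]
    refine MixedGraph.blocked_of_not_arrowInto one_pos hk ?_ ⟨hcopy, hp1⟩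
    rw [Nat.sub_self, hp.1]
    exact icm_not_arrowInto_of_sink hsink rfl hp1

end ICM

theorem icm_not_mSep_of_edge {d : ℕ} {E : Fin d → Fin d → Prop} {i j : Fin d} (n : ℕ)
    (hij : E i j) (hji : j ≠ i) :
    ¬ (icm E).MSep (i, n) (j, n + 1) {p | p.2 = n ∧ p.1 ≠ i} := by
  refine MixedGraph.not_mSep_of_isCollider_mem (b := (j, n)) ?_ ?_ ?_ ?_ ⟨rfl, hji⟩
  · simpa using hji.symm
  · simp
  · simp
  · exact ⟨Or.inl ⟨rfl, hij⟩, Or.inr (Or.inl ⟨rfl, by simp⟩)⟩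

/-- First-order sink condition: in `ICM(G)`, the node `X_{i;n}` has no outgoing
directed edges iff for every `m ≠ n` and `j ≠ i`, `X_{i;n}` is m-separated from
`X_{j;m}` given `{X_{k;n} : k ≠ i}`. -/
theorem stmt14 {d : ℕ} (E : Fin d → Fin d → Prop) (hE : IsAcyclicRel E)
    (i : Fin d) (n : ℕ) :
    (∀ j, ¬ E i j) ↔
      ∀ m : ℕ, m ≠ n → ∀ j, j ≠ i →
        (icm E).MSep (i, n) (j, m) {p | p.2 = n ∧ p.1 ≠ i} := by
  refine ⟨fun hsink m hm j hj => icm_mSep_of_sink hsink hm hj, fun hsep j hij => ?_⟩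
  have hji : j ≠ i := by
    rintro rfl
    exact hE j (.single hij)
  exact icm_not_mSep_of_edge n hij hji (hsep (n + 1) (by omega) j hji)
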